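/- Any compact exact Lagrangian submanifold L ⊂ T*S^{4k+1} with vanishing Maslov class that is a homotopy sphere and bounds a compact parallelizable manifold cannot realize those exotic smooth structures on S^{4k+1} that do not bound parallelizable manifolds; in particular, in dimension 9, at most 2 of the 8 smooth structures on the 9-sphere can arise as such Lagrangians. -/

import Mathlib

theorem stmt18
    (Θ : Type*) [Group Θ] (bP : Subgroup Θ)
    (hΘ : Nat.card Θ = 8) (hbP : Nat.card bP = 2)
    (IsLag : Θ → Prop)
    -- the main theorem of the paper: every Lagrangian homotopy 9-sphere in T*S⁹
    -- bounds a parallelizable manifold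
    (hMain : ∀ σ : Θ, IsLag σ → σ ∈ bP) :
    bP.index = 4 ∧ Nat.card {σ : Θ // IsLag σ} ≤ 2 := by
  have : Finite Θ := Nat.finite_of_card_ne_zero (by omega)
  constructor
  · have hmul := bP.card_mul_index
    rw [hbP, hΘ] at hmul
    omega
  · calc Nat.card {σ : Θ // IsLag σ} ≤ Nat.card bP := Nat.card_mono (Set.toFinite _) hMain
      _ = 2 := hbP
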